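/- Let Q ∈ SO(2) be a rotation of ℝ², let d : ℝ² → ℝ³ be continuously differentiable, and let β : ℝ² → ℝ be a twice continuously differentiable function with compact support. Then ∫_{ℝ²} (∇d ⊙ ∇d)(x) : ∇∇⊥β(x) dx = ∫_{ℝ²} (∇d_Q ⊙ ∇d_Q)(y) : ∇∇⊥β_Q(y) dy, where d_Q(y) = d(Qy), β_Q(y) = β(Qy), ∇⊥β = (−∂₂β, ∂₁β), ∇∇⊥β is the 2×2 matrix of partial derivatives of ∇⊥β, and A : B = Σ_{i,j} A_{ij}B_{ij}. -/

import Mathlib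

/-!
Since `Q ∈ SO(2)` commutes with the quarter turn, `∇⊥(β ∘ Q) = Qᵀ (∇⊥β ∘ Q)`, and the chain rule
gives `∇d_Q ⊙ ∇d_Q = Qᵀ (∇d ⊙ ∇d) Q` and `∇∇⊥β_Q = Qᵀ (∇∇⊥β) Q` at `Qy`. The pairing
`A : B = tr (A Bᵀ)` is invariant under conjugation by an orthogonal matrix, so the integrands agree
up to the substitution `x = Qy`, which preserves Lebesgue measure.
-/

open MeasureTheory Real Filter Topology

noncomputable section

abbrev E2 : Type := EuclideanSpace ℝ (Fin 2)
abbrev E3 : Type := EuclideanSpace ℝ (Fin 3)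

/-- The `i`-th standard basis vector of `ℝ²`. -/
def ee (i : Fin 2) : E2 := EuclideanSpace.single i 1

/-- Partial derivative `∂ᵢ f` of a map on `ℝ²`. -/
def pd {F : Type} [NormedAddCommGroup F] [NormedSpace ℝ F]
    (i : Fin 2) (f : E2 → F) (x : E2) : F := fderiv ℝ f x (ee i)

/-- The action of a `2 × 2` matrix on `ℝ²`. -/
def matAct (Q : Matrix (Fin 2) (Fin 2) ℝ) (x : E2) : E2 :=
  (EuclideanSpace.equiv (Fin 2) ℝ).symm (Q.mulVec (fun i => x i))

/-- The integrand `(∇d ⊙ ∇d) : ∇∇⊥β`, where `∇⊥β = (−∂₂β, ∂₁β)`. -/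
def stressTested (d : E2 → E3) (β : E2 → ℝ) (x : E2) : ℝ :=
  ∑ i : Fin 2, ∑ j : Fin 2,
    (inner ℝ (pd i d x) (pd j d x) : ℝ) * pd i (fun y => ![-pd 1 β y, pd 0 β y] j) x

namespace Matrix

theorem sum_sum_mul_eq_trace_mul_transpose {n R : Type*} [Fintype n] [CommSemiring R]
    (A B : Matrix n n R) : ∑ i, ∑ j, A i j * B i j = (A * Bᵀ).trace := by
  simp [trace, mul_apply]

theorem sum_sum_mul_orthogonal_conj {n R : Type*} [Fintype n] [DecidableEq n] [CommRing R]
    {Q : Matrix n n R} (hQ : Qᵀ * Q = 1) (A B : Matrix n n R) :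
    ∑ i, ∑ j, (Qᵀ * A * Q) i j * (Qᵀ * B * Q) i j = ∑ i, ∑ j, A i j * B i j := by
  have hQ' : Q * Qᵀ = 1 := mul_eq_one_comm.mp hQ
  simp only [sum_sum_mul_eq_trace_mul_transpose, transpose_mul, transpose_transpose]
  calc (Qᵀ * A * Q * (Qᵀ * (Bᵀ * Q))).trace = (Qᵀ * (A * Bᵀ * Q)).trace := by
        simp only [Matrix.mul_assoc, ← Matrix.mul_assoc Q, hQ', Matrix.one_mul]
    _ = (A * Bᵀ).trace := by
        rw [trace_mul_comm, Matrix.mul_assoc, hQ', Matrix.mul_one]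

theorem entries_eq_of_transpose_mul_self_eq_one_of_det_eq_one {R : Type*} [CommRing R]
    {Q : Matrix (Fin 2) (Fin 2) R} (hQ : Qᵀ * Q = 1) (hdet : Q.det = 1) : Q 1 1 = Q 0 0 ∧ Q 0 1 = -Q 1 0 := by
  have h00 := congrFun₂ hQ 0 0
  have h01 := congrFun₂ hQ 0 1
  simp only [mul_apply, transpose_apply, Fin.sum_univ_two, one_apply_eq,
    one_apply_ne zero_ne_one] at h00 h01
  rw [det_fin_two] at hdet
  constructor
  · linear_combination (-(Q 1 1)) * h00 + Q 0 0 * hdet + Q 1 0 * h01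
  · linear_combination (-(Q 0 1)) * h00 + Q 0 0 * h01 + (-(Q 1 0)) * hdet

end Matrix

open Matrix

theorem matAct_apply (Q : Matrix (Fin 2) (Fin 2) ℝ) (x : E2) (i : Fin 2) :
    matAct Q x i = ∑ k, Q i k * x k := rfl

theorem matAct_ee (Q : Matrix (Fin 2) (Fin 2) ℝ) (i : Fin 2) :
    matAct Q (ee i) = ∑ k, Q k i • ee k := by
  ext l
  fin_cases i <;> fin_cases l <;> simp [matAct_apply, ee, Fin.sum_univ_two]

def matActIsometry {Q : Matrix (Fin 2) (Fin 2) ℝ} (hQ : Qᵀ * Q = 1) : E2 ≃ₗᵢ[ℝ] E2 :=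
  LinearIsometry.toLinearIsometryEquiv
    ((toEuclideanLin Q).isometryOfInner fun x y => by
      rw [← LinearMap.adjoint_inner_right, ← toEuclideanLin_conjTranspose_eq_adjoint]
      congr 1
      apply WithLp.ofLp_injective
      change Qᴴ *ᵥ (Q *ᵥ y.ofLp) = y.ofLp
      rw [mulVec_mulVec, conjTranspose_eq_transpose_of_trivial, hQ, one_mulVec])
    rfl

@[simp]
theorem coe_matActIsometry {Q : Matrix (Fin 2) (Fin 2) ℝ} (hQ : Qᵀ * Q = 1) :
    ⇑(matActIsometry hQ) = matAct Q := rfl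

theorem pd_comp_linearIsometryEquiv {F : Type} [NormedAddCommGroup F] [NormedSpace ℝ F]
    (T : E2 ≃ₗᵢ[ℝ] E2) (f : E2 → F) (i : Fin 2) (y : E2) :
    pd i (fun w => f (T w)) y = fderiv ℝ f (T y) (T (ee i)) := by
  change fderiv ℝ (f ∘ T.toContinuousLinearEquiv) y (ee i) = _
  rw [ContinuousLinearEquiv.comp_right_fderiv]
  rfl

theorem pd_comp_matAct {F : Type} [NormedAddCommGroup F] [NormedSpace ℝ F]
    {Q : Matrix (Fin 2) (Fin 2) ℝ} (hQ : Qᵀ * Q = 1) (f : E2 → F) (i : Fin 2) (y : E2) :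
    pd i (fun w => f (matAct Q w)) y = ∑ k, Q k i • pd k f (matAct Q y) := by
  rw [← coe_matActIsometry hQ, pd_comp_linearIsometryEquiv, coe_matActIsometry, matAct_ee,
    map_sum]
  simp only [map_smul, pd]

theorem pd_sum_mul {ι : Type} [Fintype ι] (c : ι → ℝ) (g : ι → E2 → ℝ) (i : Fin 2) (y : E2)
    (hg : ∀ k, DifferentiableAt ℝ (g k) y) :
    pd i (fun z => ∑ k, c k * g k z) y = ∑ k, c k * pd i (g k) y := by
  simp only [pd]
  rw [fderiv_fun_sum fun k _ => (hg k).const_mul (c k)]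
  simp [fderiv_const_mul (hg _)]

theorem gram_pd_comp_matAct {Q : Matrix (Fin 2) (Fin 2) ℝ} (hQ : Qᵀ * Q = 1) (d : E2 → E3)
    (y : E2) :
    gram ℝ (fun i => pd i (fun w => d (matAct Q w)) y)
      = Qᵀ * gram ℝ (fun i => pd i d (matAct Q y)) * Q := by
  ext i j
  simp only [gram_apply, pd_comp_matAct hQ, sum_inner, inner_sum, real_inner_smul_left,
    real_inner_smul_right, mul_apply, transpose_apply, Finset.sum_mul]
  exact Finset.sum_congr rfl fun _ _ => Finset.sum_congr rfl fun _ _ => by ring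

def perpGrad (β : E2 → ℝ) (j : Fin 2) (y : E2) : ℝ := ![-pd 1 β y, pd 0 β y] j

def perpGradJacobian (β : E2 → ℝ) (x : E2) : Matrix (Fin 2) (Fin 2) ℝ :=
  of fun i j => pd i (perpGrad β j) x

theorem stressTested_eq_sum_gram_mul_perpGradJacobian (d : E2 → E3) (β : E2 → ℝ) (x : E2) :
    stressTested d β x
      = ∑ i, ∑ j, gram ℝ (fun k => pd k d x) i j * perpGradJacobian β x i j := rfl

theorem perpGrad_comp_matAct {Q : Matrix (Fin 2) (Fin 2) ℝ} (hQ : Qᵀ * Q = 1) (hdet : Q.det = 1)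
    (β : E2 → ℝ) (j : Fin 2) (y : E2) :
    perpGrad (fun w => β (matAct Q w)) j y = ∑ k, Q k j * perpGrad β k (matAct Q y) := by
  obtain ⟨h11, h01⟩ := entries_eq_of_transpose_mul_self_eq_one_of_det_eq_one hQ hdet
  fin_cases j <;>
  · simp only [perpGrad, pd_comp_matAct hQ, smul_eq_mul, Fin.sum_univ_two, h11, h01,
      Fin.zero_eta, Fin.mk_one, cons_val_zero, cons_val_one, cons_val_fin_one]
    ring

theorem differentiable_perpGrad {β : E2 → ℝ} (hβ : ContDiff ℝ 2 β) (j : Fin 2) :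
    Differentiable ℝ (perpGrad β j) := by
  have hpd : ∀ k, Differentiable ℝ (pd k β) := fun k =>
    ((hβ.fderiv_right le_rfl).clm_apply contDiff_const).differentiable one_ne_zero
  fin_cases j
  · exact (hpd 1).neg
  · exact hpd 0

theorem perpGradJacobian_comp_matAct {Q : Matrix (Fin 2) (Fin 2) ℝ} (hQ : Qᵀ * Q = 1)
    (hdet : Q.det = 1) {β : E2 → ℝ} (hβ : ContDiff ℝ 2 β) (y : E2) :
    perpGradJacobian (fun w => β (matAct Q w)) y = Qᵀ * perpGradJacobian β (matAct Q y) * Q := by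
  ext i j
  have hcomp k : Differentiable ℝ fun z => perpGrad β k (matAct Q z) :=
    (differentiable_perpGrad hβ k).comp (matActIsometry hQ).differentiable
  have hperp : perpGrad (fun w => β (matAct Q w)) j
      = fun z => ∑ k, Q k j * perpGrad β k (matAct Q z) :=
    funext (perpGrad_comp_matAct hQ hdet β j)
  rw [perpGradJacobian, of_apply, hperp, pd_sum_mul _ _ _ _ fun k => (hcomp k).differentiableAt]
  simp only [pd_comp_matAct hQ (perpGrad β _), smul_eq_mul, perpGradJacobian, mul_apply,
    transpose_apply, of_apply, Finset.sum_mul, Finset.mul_sum]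
  exact Finset.sum_congr rfl fun _ _ => Finset.sum_congr rfl fun _ _ => by ring

theorem stressTested_comp_matAct {Q : Matrix (Fin 2) (Fin 2) ℝ} (hQ : Qᵀ * Q = 1)
    (hdet : Q.det = 1) (d : E2 → E3) {β : E2 → ℝ} (hβ : ContDiff ℝ 2 β) (y : E2) :
    stressTested (fun w => d (matAct Q w)) (fun w => β (matAct Q w)) y
      = stressTested d β (matAct Q y) := by
  rw [stressTested_eq_sum_gram_mul_perpGradJacobian, gram_pd_comp_matAct hQ,
    perpGradJacobian_comp_matAct hQ hdet hβ, sum_sum_mul_orthogonal_conj hQ]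
  rfl

theorem rotation_covariance_general
    (Q : Matrix (Fin 2) (Fin 2) ℝ) (hQ : Q.transpose * Q = 1) (hdet : Q.det = 1)
    (d : E2 → E3)
    (β : E2 → ℝ) (hβ : ContDiff ℝ 2 β) :
    ∫ x, stressTested d β x = ∫ y, stressTested (fun w => d (matAct Q w)) (fun w => β (matAct Q w)) y := by
  simp only [stressTested_comp_matAct hQ hdet d hβ]
  exact (integral_comp (matActIsometry hQ) (stressTested d β)).symm

/-- **Rotational covariance of the tested Ericksen stress (identity (3.6)).** For a rotation
`Q ∈ SO(2)`, a `C¹` map `d : ℝ² → ℝ³` and a compactly supported `C²` function `β`,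
`∫ (∇d ⊙ ∇d) : ∇∇⊥β dx = ∫ (∇d_Q ⊙ ∇d_Q) : ∇∇⊥β_Q dy` where `d_Q(y) = d(Qy)`,
`β_Q(y) = β(Qy)`. -/
theorem rotation_covariance
    (Q : Matrix (Fin 2) (Fin 2) ℝ) (hQ : Q.transpose * Q = 1) (hdet : Q.det = 1)
    (d : E2 → E3) (hd : ContDiff ℝ 1 d)
    (β : E2 → ℝ) (hβ : ContDiff ℝ 2 β) (hsupp : HasCompactSupport β) :
    ∫ x, stressTested d β x = ∫ y, stressTested (fun w => d (matAct Q w)) (fun w => β (matAct Q w)) y :=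
  rotation_covariance_general Q hQ hdet d β hβ
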